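/- For β ∈ {12★, 1★3, ★23}: under 123 ↔ β, every equivalence class contains exactly one 123-avoiding permutation. Equivalently, for each 123-avoiding permutation τ the set of all permutations whose primitive permutation under 123 ↔ β is τ forms an equivalence class, these classes are pairwise distinct, and every permutation lies in exactly one of them. -/

import Mathlib

/-!
Pattern-replacement equivalences between permutations of different lengths
(arXiv:1309.4802). A ★-pattern is encoded as a `List (Option ℕ)`, where `none`
is the placeholder ★ and `some k` an integer entry.
-/

/-- A ★-pattern / star-string entry: `none` is ★, `some k` an integer `k`. -/
abbrev SPat := List (Option ℕ)

/-- The integer entries of a star-string, in order. -/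
def ints (ρ : SPat) : List ℕ := ρ.filterMap id

/-- Two lists of naturals are order-isomorphic. -/
def OrdIso (u v : List ℕ) : Prop :=
  u.length = v.length ∧
  ∀ i j, i < u.length → j < u.length → (u.getD i 0 < u.getD j 0 ↔ v.getD i 0 < v.getD j 0)

/-- A valid string of distinct positive integers and ★'s. -/
def StarStr (ρ : SPat) : Prop := (ints ρ).Nodup ∧ ∀ k ∈ ints ρ, 0 < k

/-- `r` (entry by entry) forms a copy of the ★-pattern `δ`: ★'s in the same
positions, and the integer entries order-isomorphic. -/
def IsCopy (r δ : SPat) : Prop :=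
  r.length = δ.length ∧
  (∀ i, (r.getD i none = none ↔ δ.getD i none = none)) ∧
  OrdIso (ints r) (ints δ)

/-- `Repl a b ρ₁ ρ₂` : `ρ₂` is obtained from `ρ₁` by replacing an occurrence of `a`
as a (not necessarily contiguous) substring of `ρ₁` by `b`, entry by entry at the
same positions. -/
inductive Repl : SPat → SPat → SPat → SPat → Prop
  | nil : Repl [] [] [] []
  | keep {a b ρ₁ ρ₂} (x : Option ℕ) : Repl a b ρ₁ ρ₂ → Repl a b (x :: ρ₁) (x :: ρ₂)
  | repl {a b ρ₁ ρ₂} (x y : Option ℕ) :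
      Repl a b ρ₁ ρ₂ → Repl (x :: a) (y :: b) (x :: ρ₁) (y :: ρ₂)

/-- `π` is a permutation of `1, …, n` (as a list). -/
def IsPermList (π : List ℕ) : Prop := π.Perm (List.range' 1 π.length)

/-- `σ` is a result of the replacement `α → β` applied to the permutation `π`:
(1) `ρ₁` is `π` renumbered (order-isomorphically) with ★'s inserted anywhere;
(2) a substring `a` of `ρ₁` forming a copy of `α` is replaced (in place) by a
string `b` that is a copy of `β`, whose integers meet `ρ₁` only inside `a`, and
which agrees with `a` on the integer entries common to `α` and `β`;
(3) dropping ★'s and renumbering gives the permutation `σ`. -/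
def IsResult (α β : SPat) (π σ : List ℕ) : Prop :=
  ∃ ρ₁ ρ₂ a b : SPat,
    StarStr ρ₁ ∧ OrdIso π (ints ρ₁) ∧
    IsCopy a α ∧
    StarStr b ∧ IsCopy b β ∧
    (∀ k ∈ ints b, k ∈ ints ρ₁ → k ∈ ints a) ∧
    (∀ i j x, α.getD i none = some x → β.getD j none = some x →
      a.getD i none = b.getD j none) ∧
    Repl a b ρ₁ ρ₂ ∧
    IsPermList σ ∧ OrdIso (ints ρ₂) σ

/-- Equivalence under the bidirectional replacement `α ↔ β`: a finite sequence
of `α → β` and `β → α` replacements. -/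
def PermEquiv (α β : SPat) (π σ : List ℕ) : Prop :=
  Relation.ReflTransGen (fun τ υ => IsResult α β τ υ ∨ IsResult β α τ υ) π σ

/-- `π` is isolated under `α ↔ β`: no other permutation is equivalent to it. -/
def Isolated (α β : SPat) (π : List ℕ) : Prop :=
  ∀ σ : List ℕ, IsPermList σ → PermEquiv α β π σ → σ = π

/-- The identity permutation `1 2 ⋯ n`. -/
def idPerm (n : ℕ) : List ℕ := List.range' 1 n

/-- The reverse identity permutation `n (n-1) ⋯ 1`. -/
def ridPerm (n : ℕ) : List ℕ := (List.range' 1 n).reverse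

def pat123 : SPat := [some 1, some 2, some 3]
def pat132 : SPat := [some 1, some 3, some 2]
def patS32 : SPat := [none, some 3, some 2]
def pat3S2 : SPat := [some 3, none, some 2]
def pat32S : SPat := [some 3, some 2, none]
def patS31 : SPat := [none, some 3, some 1]
def pat3S1 : SPat := [some 3, none, some 1]
def pat31S : SPat := [some 3, some 1, none]
def patS21 : SPat := [none, some 2, some 1]
def pat2S1 : SPat := [some 2, none, some 1]
def pat21S : SPat := [some 2, some 1, none]
def pat12S : SPat := [some 1, some 2, none]
def pat1S3 : SPat := [some 1, none, some 3]
def patS23 : SPat := [none, some 2, some 3]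
def patS12 : SPat := [none, some 1, some 2]
def pat23S : SPat := [some 2, some 3, none]
def pat13S : SPat := [some 1, some 3, none]
def pat1S2 : SPat := [some 1, none, some 2]

/-- `l` contains a (not necessarily contiguous) copy of the pattern `123`. -/
def contains123 (l : List ℕ) : Prop :=
  ∃ i j k, i < j ∧ j < k ∧ k < l.length ∧
    l.getD i 0 < l.getD j 0 ∧ l.getD j 0 < l.getD k 0

/-- All copies of `123` in `l` (as triples of 0-indexed positions), listed in
lexicographic order: first by position of the smallest element, then of the
middle element, then of the largest element. -/
def triples123 (l : List ℕ) : List (ℕ × ℕ × ℕ) :=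
  (List.range l.length).flatMap fun i =>
    (List.range l.length).flatMap fun j =>
      (List.range l.length).filterMap fun k =>
        if i < j ∧ j < k ∧ l.getD i 0 < l.getD j 0 ∧ l.getD j 0 < l.getD k 0
        then some (i, j, k) else none

/-- The leftmost copy of `123` in `l`, if any. -/
def leftmost123 (l : List ℕ) : Option (ℕ × ℕ × ℕ) := (triples123 l).head?

/-- Repeatedly (with fuel) erase, from the leftmost copy of `123`, the entry at
the position selected by `d`, until no copy of `123` remains. -/
def pIter (d : ℕ × ℕ × ℕ → ℕ) : ℕ → List ℕ → List ℕ
  | 0, l => l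
  | n + 1, l =>
    match leftmost123 l with
    | none => l
    | some t => pIter d n (l.eraseIdx (d t))

/-- Renumber a list of distinct naturals, preserving relative order, into a
permutation of `1, …, n`. -/
def renumber (l : List ℕ) : List ℕ := l.map fun x => (l.filter fun y => y ≤ x).length

def pGamma (d : ℕ × ℕ × ℕ → ℕ) (l : List ℕ) : List ℕ := renumber (pIter d l.length l)

/-- `p_γ` for `γ = 12★`: repeatedly delete the largest element of the leftmost
copy of `123`, then renumber. -/
def p12star (l : List ℕ) : List ℕ := pGamma (fun t => t.2.2) l

/-- `p_γ` for `γ = 1★3`: repeatedly delete the middle element of the leftmost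
copy of `123`, then renumber. -/
def p1star3 (l : List ℕ) : List ℕ := pGamma (fun t => t.2.1) l

/-!
Fix the position `d` of the star in `β`, so that `β` is `123` with its `d`-th entry starred.
Applied to a permutation, `123 → β` deletes the `d`-th entry of some copy of `123` and
renumbers, and `β → 123` undoes such a deletion. So the classes of `123 ↔ β` are the classes
of the equivalence generated by this deletion step. The step shortens the permutation, so it
terminates, and the permutations where it stops are exactly the `123`-avoiders. It also has the
diamond property: after deleting the `d`-th entry of one copy of `123`, the entry that a second
copy would delete is still the `d`-th entry of some copy of `123`, and both deletions commute.
By Church–Rosser every class therefore contains exactly one `123`-avoider.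
-/

namespace Relation

variable {α : Type*} {r : α → α → Prop}

theorem exists_reflTransGen_forall_not (hwf : WellFounded (flip r)) (a : α) :
    ∃ b, ReflTransGen r a b ∧ ∀ c, ¬ r b c := by
  induction a using hwf.induction with
  | _ a ih =>
    by_cases h : ∃ c, r a c
    · obtain ⟨c, hac⟩ := h
      obtain ⟨b, hcb, hb⟩ := ih c hac
      exact ⟨b, .head hac hcb, hb⟩
    · exact ⟨a, .refl, fun c hc => h ⟨c, hc⟩⟩

theorem eq_of_eqvGen_of_forall_not
    (h : ∀ a b c, r a b → r a c → ∃ d, ReflGen r b d ∧ ReflTransGen r c d)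
    {a b : α} (ha : ∀ c, ¬ r a c) (hb : ∀ c, ¬ r b c) (hab : EqvGen r a b) : a = b := by
  have hjoin : SymmGen r ≤ Join (ReflTransGen r) := fun x y hxy =>
    hxy.elim (fun h => ⟨y, .single h, .refl⟩) (fun h => ⟨x, .refl, .single h⟩)
  rw [← EqvGen.reflTransGen_symmGen] at hab
  obtain ⟨c, hac, hbc⟩ :=
    reflTransGen_le_of_equivalence_of_le (equivalence_join_reflTransGen h) hjoin a b hab
  have eq_of_normal {x : α} (hx : ∀ c, ¬ r x c) (hxc : ReflTransGen r x c) : x = c := by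
    rcases hxc.cases_head with hxc | ⟨y, hxy, _⟩
    · exact hxc
    · exact absurd hxy (hx y)
  exact (eq_of_normal ha hac).trans (eq_of_normal hb hbc).symm

end Relation

/-- The position of entry `m` of a list once the entry at position `e ≠ m` is erased. -/
def adj (e m : ℕ) : ℕ := if m < e then m else m - 1

namespace List

variable {α : Type*}

theorem getD_eraseIdx (l : List α) (d : α) (m n : ℕ) :
    (l.eraseIdx m).getD n d = l.getD (if n < m then n else n + 1) d := by
  simp only [getD_eq_getElem?_getD, getElem?_eraseIdx]
  split_ifs <;> rfl

theorem getD_eraseIdx_adj (l : List α) (d : α) {e m : ℕ} (hm : m ≠ e) :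
    (l.eraseIdx e).getD (adj e m) d = l.getD m d := by
  rw [getD_eraseIdx, adj]
  split_ifs <;> first | rfl | omega | (congr 1; omega)

theorem eraseIdx_eraseIdx_adj_comm (l : List α) (e e' : ℕ) :
    (l.eraseIdx e).eraseIdx (adj e e') = (l.eraseIdx e').eraseIdx (adj e' e) := by
  apply ext_getElem?
  intro n
  simp only [getElem?_eraseIdx, adj]
  split_ifs <;> first | rfl | omega

theorem map_getD_range (l : List α) (d : α) : (range l.length).map (l.getD · d) = l := by
  apply ext_getElem (by simp)
  intro n _ h
  simp [getElem?_eq_getElem h]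

theorem exists_eq_append_getD_cons {l : List α} (d : α) {i : ℕ} (hi : i < l.length) :
    ∃ p t, l = p ++ l.getD i d :: t ∧ p.length = i :=
  ⟨l.take i, l.drop (i + 1), by
    rw [getD_eq_getElem _ _ hi, ← drop_eq_getElem_cons, take_append_drop], by simp; omega⟩

theorem countP_lt_countP {p q : α → Bool} {l : List α} (h : ∀ z ∈ l, p z → q z) {a : α}
    (ha : a ∈ l) (hpa : ¬ p a) (hqa : q a) : l.countP p < l.countP q := by
  induction l with
  | nil => simp at ha
  | cons b l ih =>
    have hl : ∀ z ∈ l, p z → q z := fun z hz => h z (mem_cons_of_mem b hz)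
    have hb := h b mem_cons_self
    have hle := countP_mono_left hl
    simp only [countP_cons]
    rcases mem_cons.mp ha with rfl | ha
    · simp [hpa, hqa]
      omega
    · have := ih hl ha
      cases hpb : p b <;> cases hqb : q b <;> simp [hpb, hqb] at hb ⊢ <;> omega

theorem countP_range'_le {n x : ℕ} (hx : x ≤ n) : (range' 1 n).countP (· ≤ x) = x := by
  have hsplit : range' 1 n = range' 1 x ++ range' (1 + x) (n - x) := by
    rw [range'_append_1]; congr 1; omega
  rw [hsplit, countP_append, countP_eq_length.mpr, countP_eq_zero.mpr, length_range',
    Nat.add_zero]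
  · intro y hy; simp [mem_range'_1] at hy ⊢; omega
  · intro y hy; simp [mem_range'_1] at hy ⊢; omega

end List

namespace OrdIso

theorem refl (u : List ℕ) : OrdIso u u := ⟨rfl, fun _ _ _ _ => Iff.rfl⟩

theorem symm {u v : List ℕ} (h : OrdIso u v) : OrdIso v u :=
  ⟨h.1.symm, fun i j hi hj => (h.2 i j (h.1 ▸ hi) (h.1 ▸ hj)).symm⟩

theorem le_iff {u v : List ℕ} (h : OrdIso u v) {i j : ℕ} (hi : i < u.length) (hj : j < u.length) :
    u.getD i 0 ≤ u.getD j 0 ↔ v.getD i 0 ≤ v.getD j 0 := by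
  simpa only [not_lt] using (h.2 j i hj hi).not

theorem eraseIdx {u v : List ℕ} (h : OrdIso u v) (m : ℕ) :
    OrdIso (u.eraseIdx m) (v.eraseIdx m) := by
  have hlen : (u.eraseIdx m).length = (v.eraseIdx m).length := by
    simp only [List.length_eraseIdx, h.1]
  refine ⟨hlen, fun i j hi hj => ?_⟩
  have hidx {n : ℕ} (hn : n < (u.eraseIdx m).length) :
      (if n < m then n else n + 1) < u.length := by
    rw [List.length_eraseIdx] at hn
    split <;> split at hn <;> omega
  simp only [List.getD_eraseIdx]
  exact h.2 _ _ (hidx hi) (hidx hj)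

end OrdIso

theorem length_filter_le_eq_countP_range (l : List ℕ) (x : ℕ) :
    (l.filter (· ≤ x)).length = (List.range l.length).countP (l.getD · 0 ≤ x) := by
  calc (l.filter (· ≤ x)).length = l.countP (· ≤ x) := (List.countP_eq_length_filter ..).symm
    _ = ((List.range l.length).map (l.getD · 0)).countP (· ≤ x) := by rw [List.map_getD_range]
    _ = _ := by rw [List.countP_map]; rfl

theorem length_filter_le_lt_iff {l : List ℕ} {x y : ℕ} (hy : y ∈ l) :
    (l.filter (· ≤ x)).length < (l.filter (· ≤ y)).length ↔ x < y := by
  simp only [← List.countP_eq_length_filter]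
  constructor
  · intro hlt
    by_contra hyx
    exact absurd hlt (not_lt.mpr (List.countP_mono_left fun z _ hz => by simp at hz ⊢; omega))
  · intro hxy
    exact List.countP_lt_countP (fun z _ hz => by simp at hz ⊢; omega) hy (by simpa using hxy)
      (by simp)

theorem length_renumber (l : List ℕ) : (renumber l).length = l.length := by
  simp [renumber]

theorem ordIso_renumber (l : List ℕ) : OrdIso l (renumber l) := by
  refine ⟨(length_renumber l).symm, fun i j hi hj => ?_⟩
  rw [List.getD_eq_getElem _ _ hi, List.getD_eq_getElem _ _ hj,
    List.getD_eq_getElem _ _ ((length_renumber l).symm ▸ hi),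
    List.getD_eq_getElem _ _ ((length_renumber l).symm ▸ hj)]
  simp only [renumber, List.getElem_map]
  exact (length_filter_le_lt_iff (List.getElem_mem hj)).symm

theorem renumber_eq_of_ordIso {u v : List ℕ} (h : OrdIso u v) : renumber u = renumber v := by
  apply List.ext_getElem (by simp [length_renumber, h.1])
  intro i hu hv
  rw [length_renumber] at hu hv
  simp only [renumber]
  rw [List.getElem_map, List.getElem_map, ← List.getD_eq_getElem _ 0 hu,
    ← List.getD_eq_getElem _ 0 hv, length_filter_le_eq_countP_range,
    length_filter_le_eq_countP_range, ← h.1]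
  exact List.countP_congr fun j hj => by simpa using h.le_iff (List.mem_range.mp hj) hu

namespace IsPermList

variable {π : List ℕ}

theorem nodup (h : IsPermList π) : π.Nodup :=
  h.nodup_iff.mpr List.nodup_range'

theorem pos (h : IsPermList π) {m : ℕ} (hm : m ∈ π) : 0 < m :=
  (List.mem_range'_1.mp (h.subset hm)).1

theorem renumber_eq (h : IsPermList π) : renumber π = π := by
  refine (List.map_congr_left fun x hx => ?_).trans (List.map_id π)
  have hx := List.mem_range'_1.mp (h.subset hx)
  rw [← List.countP_eq_length_filter, h.countP_eq, List.countP_range'_le (by omega)]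
  rfl

theorem eq_renumber_of_ordIso {l : List ℕ} (hπ : IsPermList π) (h : OrdIso l π) :
    π = renumber l := by
  rw [renumber_eq_of_ordIso h, hπ.renumber_eq]

end IsPermList

theorem isPermList_renumber {l : List ℕ} (hl : l.Nodup) : IsPermList (renumber l) := by
  have hnodup : (renumber l).Nodup := by
    refine hl.map_on fun x hx y hy hxy => ?_
    rcases lt_trichotomy x y with hlt | rfl | hlt
    · exact absurd hxy ((length_filter_le_lt_iff hy).mpr hlt).ne
    · rfl
    · exact absurd hxy ((length_filter_le_lt_iff hx).mpr hlt).ne'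
  have hsub : renumber l ⊆ List.range' 1 l.length := by
    intro m hm
    obtain ⟨x, hx, rfl⟩ := List.mem_map.mp hm
    rw [List.mem_range'_1]
    exact ⟨List.length_pos_of_mem (List.mem_filter.mpr ⟨hx, by simp⟩),
      Nat.lt_one_add_iff.mpr (List.length_filter_le _ _)⟩
  rw [IsPermList, length_renumber]
  exact (hnodup.subperm hsub).perm_of_length_le (by simp [length_renumber])

def IsOcc123 (l : List ℕ) (i j k : ℕ) : Prop :=
  i < j ∧ j < k ∧ k < l.length ∧ l.getD i 0 < l.getD j 0 ∧ l.getD j 0 < l.getD k 0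

theorem contains123_iff {l : List ℕ} : contains123 l ↔ ∃ i j k, IsOcc123 l i j k := Iff.rfl

/-- The position, among `i < j < k`, of the entry starred in `pat123.set d none`. -/
def pick (d : Fin 3) (i j k : ℕ) : ℕ := ![i, j, k] d

@[simp] theorem pick_zero (i j k : ℕ) : pick 0 i j k = i := rfl
@[simp] theorem pick_one (i j k : ℕ) : pick 1 i j k = j := rfl
@[simp] theorem pick_two (i j k : ℕ) : pick 2 i j k = k := rfl

theorem pick_adj (d : Fin 3) (e i j k : ℕ) :
    pick d (adj e i) (adj e j) (adj e k) = adj e (pick d i j k) := by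
  fin_cases d <;> rfl

namespace IsOcc123

variable {l : List ℕ} {i j k : ℕ}

theorem of_ordIso {l' : List ℕ} (ho : IsOcc123 l i j k) (h : OrdIso l l') : IsOcc123 l' i j k := by
  obtain ⟨hij, hjk, hk, h₁, h₂⟩ := ho
  exact ⟨hij, hjk, h.1 ▸ hk, (h.2 i j (by omega) (by omega)).mp h₁,
    (h.2 j k (by omega) hk).mp h₂⟩

theorem eraseIdx {e : ℕ} (ho : IsOcc123 l i j k) (he : e < l.length)
    (hi : i ≠ e) (hj : j ≠ e) (hk : k ≠ e) :
    IsOcc123 (l.eraseIdx e) (adj e i) (adj e j) (adj e k) := by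
  obtain ⟨hij, hjk, hkl, h₁, h₂⟩ := ho
  refine ⟨?_, ?_, ?_, ?_, ?_⟩
  · unfold adj; split_ifs <;> omega
  · unfold adj; split_ifs <;> omega
  · rw [List.length_eraseIdx_of_lt he]; unfold adj; split_ifs <;> omega
  · rwa [List.getD_eraseIdx_adj l 0 hi, List.getD_eraseIdx_adj l 0 hj]
  · rwa [List.getD_eraseIdx_adj l 0 hj, List.getD_eraseIdx_adj l 0 hk]

theorem pick_lt_length (ho : IsOcc123 l i j k) (d : Fin 3) : pick d i j k < l.length := by
  obtain ⟨_, _, _, _, _⟩ := ho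
  fin_cases d <;> simp <;> omega

theorem exists_avoiding {i' j' k' : ℕ} (d : Fin 3) (ho : IsOcc123 l i j k)
    (ho' : IsOcc123 l i' j' k') (hne : pick d i j k ≠ pick d i' j' k') :
    ∃ p q r, IsOcc123 l p q r ∧ pick d p q r = pick d i' j' k' ∧
      p ≠ pick d i j k ∧ q ≠ pick d i j k ∧ r ≠ pick d i j k := by
  unfold IsOcc123 at *
  fin_cases d <;> simp only [Fin.zero_eta, Fin.mk_one, Fin.reduceFinMk, pick_zero, pick_one,
    pick_two] at hne ⊢
  · by_cases hj : j' = i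
    · exact ⟨i', j, k, by subst hj; omega⟩
    by_cases hk : k' = i
    · exact ⟨i', j', j, by subst hk; omega⟩
    exact ⟨i', j', k', by omega⟩
  · by_cases hi : i' = j
    · exact ⟨i, j', k', by subst hi; omega⟩
    by_cases hk : k' = j
    · exact ⟨i', j', k, by subst hk; omega⟩
    exact ⟨i', j', k', by omega⟩
  · by_cases hi : i' = k
    · exact ⟨i, j', k', by subst hi; omega⟩
    by_cases hj : j' = k
    · exact ⟨i, j, k', by subst hj; omega⟩
    exact ⟨i', j', k', by omega⟩

theorem exists_split (ho : IsOcc123 l i j k) :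
    ∃ p q r s, l = p ++ l.getD i 0 :: (q ++ l.getD j 0 :: (r ++ l.getD k 0 :: s)) ∧
      i = p.length ∧ j = p.length + (q.length + 1) ∧
      k = p.length + (q.length + (r.length + 1) + 1) := by
  obtain ⟨hij, hjk, hk, -, -⟩ := ho
  obtain ⟨l₁, s, hl, hl₁⟩ := List.exists_eq_append_getD_cons 0 hk
  obtain ⟨l₂, r, hl₁', hl₂⟩ := List.exists_eq_append_getD_cons (l := l₁) 0 (i := j) (by omega)
  obtain ⟨p, q, hl₂', hp⟩ := List.exists_eq_append_getD_cons (l := l₂) 0 (i := i) (by omega)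
  have hj : l₁.getD j 0 = l.getD j 0 := by rw [hl, List.getD_append _ _ _ _ (by omega)]
  have hi : l₂.getD i 0 = l.getD i 0 := by
    rw [hl, List.getD_append _ _ _ _ (by omega), hl₁', List.getD_append _ _ _ _ (by omega)]
  have h₁ := congrArg List.length hl₁'
  have h₂ := congrArg List.length hl₂'
  simp only [List.length_append, List.length_cons] at h₁ h₂
  refine ⟨p, q, r, s, ?_, hp.symm, by omega, by omega⟩
  rw [← hi, ← hj]
  conv_lhs => rw [hl, hl₁', hl₂']
  simp

end IsOcc123

theorem isOcc123_split {p q r s : List ℕ} {u v w : ℕ} (huv : u < v) (hvw : v < w) :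
    IsOcc123 (p ++ u :: (q ++ v :: (r ++ w :: s)))
      p.length (p.length + (q.length + 1)) (p.length + (q.length + (r.length + 1) + 1)) := by
  refine ⟨by omega, by omega, by simp, ?_, ?_⟩ <;>
    simpa (disch := omega) [List.getElem?_append_right, List.getElem?_cons_zero]

def DelStep (d : Fin 3) (l l' : List ℕ) : Prop :=
  ∃ i j k, IsOcc123 l i j k ∧ l' = renumber (l.eraseIdx (pick d i j k))

namespace DelStep

variable {d : Fin 3} {l l' : List ℕ}

theorem length_lt (h : DelStep d l l') : l'.length < l.length := by
  obtain ⟨i, j, k, ho, rfl⟩ := h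
  have := ho.pick_lt_length d
  rw [length_renumber, List.length_eraseIdx_of_lt this]
  omega

theorem wellFounded_flip (d : Fin 3) : WellFounded (flip (DelStep d)) :=
  Subrelation.wf (fun h => length_lt h) (measure List.length).wf

theorem forall_not_iff : (∀ l', ¬ DelStep d l l') ↔ ¬ contains123 l := by
  simp only [DelStep, contains123_iff, not_exists, not_and]
  exact ⟨fun h i j k ho => h _ i j k ho rfl, fun h _ i j k ho _ => h i j k ho⟩

theorem isPermList (h : DelStep d l l') (hl : IsPermList l) : IsPermList l' := by
  obtain ⟨i, j, k, -, rfl⟩ := h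
  exact isPermList_renumber (hl.nodup.sublist (List.eraseIdx_sublist _ _))

theorem of_eraseIdx {e p q r : ℕ} (ho : IsOcc123 l p q r) (he : e < l.length)
    (hp : p ≠ e) (hq : q ≠ e) (hr : r ≠ e) :
    DelStep d (renumber (l.eraseIdx e))
      (renumber ((l.eraseIdx e).eraseIdx (adj e (pick d p q r)))) :=
  ⟨adj e p, adj e q, adj e r, (ho.eraseIdx he hp hq hr).of_ordIso (ordIso_renumber _), by
    rw [pick_adj, renumber_eq_of_ordIso ((ordIso_renumber _).symm.eraseIdx _)]⟩

theorem diamond {l₁ l₂ : List ℕ} (h₁ : DelStep d l l₁) (h₂ : DelStep d l l₂) :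
    ∃ l₃, Relation.ReflGen (DelStep d) l₁ l₃ ∧ Relation.ReflTransGen (DelStep d) l₂ l₃ := by
  obtain ⟨i, j, k, ho, rfl⟩ := h₁
  obtain ⟨i', j', k', ho', rfl⟩ := h₂
  by_cases he : pick d i j k = pick d i' j' k'
  · exact ⟨_, .refl, by rw [he]⟩
  obtain ⟨p, q, r, hpqr, hpick, hp, hq, hr⟩ := ho.exists_avoiding d ho' he
  obtain ⟨p', q', r', hpqr', hpick', hp', hq', hr'⟩ := ho'.exists_avoiding d ho (Ne.symm he)
  refine ⟨_, .single (of_eraseIdx hpqr (ho.pick_lt_length d) hp hq hr), .single ?_⟩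
  rw [hpick, List.eraseIdx_eraseIdx_adj_comm, ← hpick']
  exact of_eraseIdx hpqr' (ho'.pick_lt_length d) hp' hq' hr'

end DelStep

@[simp] theorem ints_nil : ints [] = [] := rfl
@[simp] theorem ints_cons_some (k : ℕ) (ρ : SPat) : ints (some k :: ρ) = k :: ints ρ := rfl
@[simp] theorem ints_cons_none (ρ : SPat) : ints (none :: ρ) = ints ρ := rfl
@[simp] theorem ints_append (ρ ρ' : SPat) : ints (ρ ++ ρ') = ints ρ ++ ints ρ' :=
  List.filterMap_append
@[simp] theorem ints_map_some (l : List ℕ) : ints (l.map some) = l := by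
  simp [ints, List.filterMap_map]

namespace Repl

variable {a b ρ₁ ρ₂ : SPat}

theorem swap (h : Repl a b ρ₁ ρ₂) : Repl b a ρ₂ ρ₁ := by
  induction h with
  | nil => exact .nil
  | keep x _ ih => exact .keep x ih
  | repl x y _ ih => exact .repl y x ih

theorem nil_nil_self : ∀ ρ : SPat, Repl [] [] ρ ρ
  | [] => .nil
  | x :: ρ => .keep x (nil_nil_self ρ)

theorem eq_of_nil_nil {ρ₁ ρ₂ : SPat} : Repl [] [] ρ₁ ρ₂ → ρ₂ = ρ₁
  | .nil => rfl
  | .keep x h => by rw [eq_of_nil_nil h]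

theorem append_cons (P : SPat) (x y : Option ℕ) (h : Repl a b ρ₁ ρ₂) :
    Repl (x :: a) (y :: b) (P ++ x :: ρ₁) (P ++ y :: ρ₂) := by
  induction P with
  | nil => exact .repl x y h
  | cons z P ih => exact .keep z ih

theorem exists_of_cons_cons {x y : Option ℕ} {ρ₁ ρ₂ : SPat} : Repl (x :: a) (y :: b) ρ₁ ρ₂ →
    ∃ P ρ₁' ρ₂', ρ₁ = P ++ x :: ρ₁' ∧ ρ₂ = P ++ y :: ρ₂' ∧ Repl a b ρ₁' ρ₂'
  | .keep z h => by
    obtain ⟨P, ρ₁', ρ₂', rfl, rfl, h'⟩ := exists_of_cons_cons h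
    exact ⟨z :: P, ρ₁', ρ₂', rfl, rfl, h'⟩
  | .repl _ _ h => ⟨[], _, _, rfl, rfl, h⟩

theorem triple_iff {x₀ x₁ x₂ y₀ y₁ y₂ : Option ℕ} :
    Repl [x₀, x₁, x₂] [y₀, y₁, y₂] ρ₁ ρ₂ ↔ ∃ P Q R S : SPat,
      ρ₁ = P ++ x₀ :: (Q ++ x₁ :: (R ++ x₂ :: S)) ∧
        ρ₂ = P ++ y₀ :: (Q ++ y₁ :: (R ++ y₂ :: S)) := by
  constructor
  · intro h
    obtain ⟨P, _, _, rfl, rfl, h₁⟩ := exists_of_cons_cons h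
    obtain ⟨Q, _, _, rfl, rfl, h₂⟩ := exists_of_cons_cons h₁
    obtain ⟨R, S, _, rfl, rfl, h₃⟩ := exists_of_cons_cons h₂
    exact ⟨P, Q, R, S, rfl, by rw [eq_of_nil_nil h₃]⟩
  · rintro ⟨P, Q, R, S, rfl, rfl⟩
    exact append_cons P _ _ (append_cons Q _ _ (append_cons R _ _ (nil_nil_self S)))

theorem ints_sublist (h : Repl a b ρ₁ ρ₂) : (ints a).Sublist (ints ρ₁) := by
  induction h with
  | nil => exact .refl _
  | keep x _ ih => cases x <;> simp [ih]
  | repl x _ _ ih => cases x <;> simp [ih]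

theorem count_ints (h : Repl a b ρ₁ ρ₂) (k : ℕ) :
    (ints ρ₁).count k + (ints b).count k = (ints ρ₂).count k + (ints a).count k := by
  induction h with
  | nil => rfl
  | keep x _ ih => cases x <;> simp [List.count_cons] <;> omega
  | repl x y _ ih => cases x <;> cases y <;> simp [List.count_cons] <;> omega

theorem nodup_ints (h : Repl a b ρ₁ ρ₂) (h₁ : (ints ρ₁).Nodup) (hb : (ints b).Nodup)
    (hint : ∀ k ∈ ints b, k ∈ ints ρ₁ → k ∈ ints a) : (ints ρ₂).Nodup := by
  rw [List.nodup_iff_count_le_one] at h₁ hb ⊢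
  intro k
  have := h.count_ints k
  have := h₁ k
  have := hb k
  by_cases hkb : k ∈ ints b
  · by_cases hk₁ : k ∈ ints ρ₁
    · have := List.count_pos_iff.mpr (hint k hkb hk₁)
      omega
    · have := List.count_eq_zero.mpr hk₁
      omega
  · have := List.count_eq_zero.mpr hkb
    omega

end Repl

namespace IsResult

variable {α β : SPat} {π σ : List ℕ}

theorem isPermList (h : IsResult α β π σ) : IsPermList σ :=
  let ⟨_, _, _, _, _, _, _, _, _, _, _, _, hσ, _⟩ := h
  hσ

theorem symm (hπ : IsPermList π) (h : IsResult α β π σ) : IsResult β α σ π := by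
  obtain ⟨ρ₁, ρ₂, a, b, ⟨hnd₁, hpos₁⟩, hπρ, ha, ⟨hndb, hposb⟩, hb, hint, hagree, hrepl, hσ,
    hρσ⟩ := h
  have hsub := hrepl.ints_sublist
  have hcount := hrepl.count_ints
  refine ⟨ρ₂, ρ₁, b, a, ⟨hrepl.nodup_ints hnd₁ hndb hint, fun k hk => ?_⟩, hρσ.symm, hb,
    ⟨hnd₁.sublist hsub, fun k hk => hpos₁ k (hsub.subset hk)⟩, ha, fun k hka hk₂ => ?_,
    fun i j x hi hj => (hagree j i x hj hi).symm, hrepl.swap, hπ, hπρ.symm⟩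
  · have := hcount k
    have := List.count_pos_iff.mpr hk
    by_cases hk₁ : k ∈ ints ρ₁
    · exact hpos₁ k hk₁
    · have := List.count_eq_zero.mpr hk₁
      exact hposb k (List.count_pos_iff.mp (by omega))
  · have := hcount k
    have := List.count_eq_one_of_mem hnd₁ (hsub.subset hka)
    have := List.count_eq_one_of_mem (hnd₁.sublist hsub) hka
    have := List.count_pos_iff.mpr hk₂
    exact List.count_pos_iff.mp (by omega)

end IsResult

theorem ordIso_triple {u v w : ℕ} (huv : u < v) (hvw : v < w) : OrdIso [u, v, w] [1, 2, 3] :=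
  ⟨rfl, fun i j hi hj => by
    simp only [List.length_cons, List.length_nil] at hi hj
    interval_cases i <;> interval_cases j <;> simp <;> omega⟩

theorem isCopy_pat123_iff {a : SPat} :
    IsCopy a pat123 ↔ ∃ u v w, u < v ∧ v < w ∧ a = [some u, some v, some w] := by
  constructor
  · rintro ⟨hlen, hstar, hord⟩
    obtain ⟨x, y, z, rfl⟩ := List.length_eq_three.mp hlen
    obtain ⟨u, rfl⟩ := Option.ne_none_iff_exists'.mp (by simpa [pat123] using hstar 0)
    obtain ⟨v, rfl⟩ := Option.ne_none_iff_exists'.mp (by simpa [pat123] using hstar 1)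
    obtain ⟨w, rfl⟩ := Option.ne_none_iff_exists'.mp (by simpa [pat123] using hstar 2)
    have h₀₁ := hord.2 0 1 (by simp [ints]) (by simp [ints])
    have h₁₂ := hord.2 1 2 (by simp [ints]) (by simp [ints])
    simp only [ints, pat123] at h₀₁ h₁₂
    exact ⟨u, v, w, by simpa using h₀₁, by simpa using h₁₂, rfl⟩
  · rintro ⟨u, v, w, huv, hvw, rfl⟩
    refine ⟨rfl, fun i => ?_, ordIso_triple huv hvw⟩
    rcases i with _ | _ | _ | i <;> simp [pat123]

section StarTriple

variable {u v w : ℕ} {d : Fin 3}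

theorem isCopy_set_none (huv : u < v) (hvw : v < w) (d : Fin 3) :
    IsCopy ([some u, some v, some w].set d none) (pat123.set d none) := by
  refine ⟨by simp [pat123], fun i => ?_, ?_⟩
  · fin_cases d <;> rcases i with _ | _ | _ | i <;> simp [pat123]
  · have h := (ordIso_triple huv hvw).eraseIdx d
    fin_cases d <;> simpa [ints, pat123] using h

theorem starStr_set_none (hu : 0 < u) (huv : u < v) (hvw : v < w) (d : Fin 3) :
    StarStr ([some u, some v, some w].set d none) := by
  fin_cases d <;> simp [StarStr] <;> omega

theorem ints_set_none_subset (u v w : ℕ) (d : Fin 3) :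
    ints ([some u, some v, some w].set d none) ⊆ ints [some u, some v, some w] := by
  fin_cases d <;> simp

theorem eq_set_none_of_isCopy {b : SPat} (hb : IsCopy b (pat123.set d none))
    (hagree : ∀ i j x, pat123.getD i none = some x → (pat123.set d none).getD j none = some x →
      [some u, some v, some w].getD i none = b.getD j none) :
    b = [some u, some v, some w].set d none := by
  obtain ⟨y₀, y₁, y₂, rfl⟩ := List.length_eq_three.mp (by simpa [pat123] using hb.1)
  have h₀ := hagree 0 0 1 rfl
  have h₁ := hagree 1 1 2 rfl
  have h₂ := hagree 2 2 3 rfl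
  have hstar := hb.2.1 d
  fin_cases d <;> simp_all [pat123]

theorem getD_eq_getD_set_none (d : Fin 3) :
    ∀ i j x, pat123.getD i none = some x → (pat123.set d none).getD j none = some x →
      [some u, some v, some w].getD i none = ([some u, some v, some w].set d none).getD j none := by
  intro i j x hi hj
  fin_cases d <;> rcases i with _ | _ | _ | i <;> rcases j with _ | _ | _ | j <;>
    simp [pat123] at hi hj ⊢ <;> omega

theorem ints_split_of_set_none {y₀ y₁ y₂ : Option ℕ}
    (hy : [some u, some v, some w].set d none = [y₀, y₁, y₂]) (P Q R S : SPat) :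
    ints (P ++ y₀ :: (Q ++ y₁ :: (R ++ y₂ :: S))) =
      (ints (P ++ some u :: (Q ++ some v :: (R ++ some w :: S)))).eraseIdx
        (pick d (ints P).length ((ints P).length + ((ints Q).length + 1))
          ((ints P).length + ((ints Q).length + ((ints R).length + 1) + 1))) := by
  fin_cases d <;> simp only at hy <;>
    obtain ⟨rfl, rfl, rfl⟩ := hy <;> simp (disch := omega) [List.eraseIdx_append_of_length_le]

theorem Repl.exists_isOcc123 {ρ₁ ρ₂ : SPat} (huv : u < v) (hvw : v < w)
    (h : Repl [some u, some v, some w] ([some u, some v, some w].set d none) ρ₁ ρ₂) :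
    ∃ i j k, IsOcc123 (ints ρ₁) i j k ∧ ints ρ₂ = (ints ρ₁).eraseIdx (pick d i j k) := by
  obtain ⟨y₀, y₁, y₂, hy⟩ :=
    List.length_eq_three.mp (by simp : ([some u, some v, some w].set d none).length = 3)
  rw [hy] at h
  obtain ⟨P, Q, R, S, rfl, rfl⟩ := Repl.triple_iff.mp h
  refine ⟨_, _, _, ?_, ints_split_of_set_none hy P Q R S⟩
  simpa using isOcc123_split (p := ints P) (q := ints Q) (r := ints R) (s := ints S) huv hvw

end StarTriple

theorem IsResult.delStep {d : Fin 3} {π σ : List ℕ}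
    (h : IsResult pat123 (pat123.set d none) π σ) : DelStep d π σ := by
  obtain ⟨ρ₁, ρ₂, a, b, -, hπρ, ha, -, hb, -, hagree, hrepl, hσ, hρσ⟩ := h
  obtain ⟨u, v, w, huv, hvw, rfl⟩ := isCopy_pat123_iff.mp ha
  obtain rfl := eq_set_none_of_isCopy hb hagree
  obtain ⟨i, j, k, ho, hρ₂⟩ := hrepl.exists_isOcc123 huv hvw
  refine ⟨i, j, k, ho.of_ordIso hπρ.symm, ?_⟩
  rw [hσ.eq_renumber_of_ordIso hρσ, hρ₂]
  exact renumber_eq_of_ordIso (hπρ.eraseIdx _).symm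

theorem DelStep.isResult {d : Fin 3} {π σ : List ℕ} (hπ : IsPermList π) (h : DelStep d π σ) :
    IsResult pat123 (pat123.set d none) π σ := by
  obtain ⟨i, j, k, ho, rfl⟩ := h
  obtain ⟨p, q, r, s, hsplit, rfl, rfl, rfl⟩ := ho.exists_split
  obtain ⟨-, -, -, huv, hvw⟩ := ho
  generalize π.getD p.length 0 = u at hsplit huv
  generalize π.getD _ 0 = v at hsplit huv hvw
  generalize π.getD _ 0 = w at hsplit hvw
  have hρ₁ : ints (p.map some ++ some u :: (q.map some ++ some v :: (r.map some ++
      some w :: s.map some))) = π := by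
    simp [hsplit]
  obtain ⟨y₀, y₁, y₂, hy⟩ :=
    List.length_eq_three.mp (by simp : ([some u, some v, some w].set d none).length = 3)
  have hρ₂ := ints_split_of_set_none hy (p.map some) (q.map some) (r.map some) (s.map some)
  rw [hρ₁, ints_map_some, ints_map_some, ints_map_some] at hρ₂
  refine ⟨_, p.map some ++ y₀ :: (q.map some ++ y₁ :: (r.map some ++ y₂ :: s.map some)),
    [some u, some v, some w], [y₀, y₁, y₂], by rw [StarStr, hρ₁]; exact ⟨hπ.nodup, fun _ => hπ.pos⟩,
    by rw [hρ₁]; exact .refl π,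
    isCopy_pat123_iff.mpr ⟨u, v, w, huv, hvw, rfl⟩,
    hy ▸ starStr_set_none (hπ.pos (by rw [hsplit]; simp)) huv hvw d,
    hy ▸ isCopy_set_none huv hvw d, fun x hx _ => ints_set_none_subset u v w d (hy ▸ hx),
    hy ▸ getD_eq_getD_set_none d, Repl.triple_iff.mpr ⟨_, _, _, _, rfl, rfl⟩,
    isPermList_renumber (hπ.nodup.sublist (List.eraseIdx_sublist _ _)), ?_⟩
  rw [hρ₂]
  exact ordIso_renumber _

section PermEquiv

variable {d : Fin 3} {π σ : List ℕ}

theorem PermEquiv.isPermList {α β : SPat} (h : PermEquiv α β π σ) (hπ : IsPermList π) :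
    IsPermList σ := by
  induction h with
  | refl => exact hπ
  | tail _ hstep _ => exact hstep.elim IsResult.isPermList IsResult.isPermList

theorem permEquiv_of_reflTransGen_delStep (h : Relation.ReflTransGen (DelStep d) π σ) :
    IsPermList π → PermEquiv pat123 (pat123.set d none) π σ := by
  induction h using Relation.ReflTransGen.head_induction_on with
  | refl => exact fun _ => .refl
  | head hstep _ ih => exact fun hπ => .head (.inl (hstep.isResult hπ)) (ih (hstep.isPermList hπ))

theorem eqvGen_delStep_of_permEquiv (h : PermEquiv pat123 (pat123.set d none) π σ) :
    IsPermList π → Relation.EqvGen (DelStep d) π σ := by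
  induction h using Relation.ReflTransGen.head_induction_on with
  | refl => exact fun _ => .refl _
  | head hstep _ ih =>
    intro hπ
    rcases hstep with h | h
    · exact .trans _ _ _ (.rel _ _ h.delStep) (ih h.isPermList)
    · exact .trans _ _ _ (.symm _ _ (.rel _ _ (h.symm hπ).delStep)) (ih h.isPermList)

theorem existsUnique_avoider_permEquiv (d : Fin 3) (hπ : IsPermList π) :
    ∃! τ, IsPermList τ ∧ ¬ contains123 τ ∧ PermEquiv pat123 (pat123.set d none) π τ := by
  obtain ⟨τ, hπτ, hτ⟩ := Relation.exists_reflTransGen_forall_not (DelStep.wellFounded_flip d) π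
  have hequiv := permEquiv_of_reflTransGen_delStep hπτ hπ
  refine ⟨τ, ⟨hequiv.isPermList hπ, DelStep.forall_not_iff.mp hτ, hequiv⟩, ?_⟩
  rintro τ' ⟨-, hτ', hπτ'⟩
  refine Relation.eq_of_eqvGen_of_forall_not (fun _ _ _ => DelStep.diamond)
    (DelStep.forall_not_iff.mpr hτ') hτ ?_
  exact .trans _ _ _ (.symm _ _ (eqvGen_delStep_of_permEquiv hπτ' hπ))
    (Relation.EqvGen.reflTransGen_le_eqvGen _ _ _ hπτ)

end PermEquiv

/-- for `β ∈ {12★, 1★3, ★23}`, under `123 ↔ β` every equivalence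
class contains exactly one `123`-avoiding permutation. -/
theorem dropOnly_classes :
    ∀ β ∈ ([pat12S, pat1S3, patS23] : List SPat),
    ∀ π : List ℕ, IsPermList π →
      ∃! τ : List ℕ, IsPermList τ ∧ ¬ contains123 τ ∧ PermEquiv pat123 β π τ := by
  intro β hβ π hπ
  obtain ⟨d, rfl⟩ : ∃ d : Fin 3, β = pat123.set d none := by
    simp only [List.mem_cons, List.not_mem_nil, or_false] at hβ
    rcases hβ with rfl | rfl | rfl
    exacts [⟨2, rfl⟩, ⟨1, rfl⟩, ⟨0, rfl⟩]
  exact existsUnique_avoider_permEquiv d hπ
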